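/- arXiv:2503.08006 — 2 statements merged into one kernel-verified Lean document; each statement's English description precedes it below -/
import Mathlib

section
/- (Convergence of CAGrad, summed form.) Let L : ℝⁿ → ℝ be differentiable with H-Lipschitz gradient for some H > 0, let 0 < α ≤ 1/H and c ∈ [0, 1). Let (θₜ)ₜ≥0 be a sequence in ℝⁿ and (dₜ)ₜ≥0 a sequence of directions such that θₜ₊₁ = θₜ − α dₜ and ‖∇L(θₜ) − dₜ‖ ≤ c‖∇L(θₜ)‖ for every t. Then for every T ≥ 0, ∑_{t=0}^{T} ‖∇L(θₜ)‖² ≤ 2(L(θ₀) − L(θ_{T+1})) / (α(1 − c²)). -/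
/-!
Along the segment from `x` to `x + v`, the Lipschitz bound on `∇L` gives the descent lemma
`L (x + v) ≤ L x + ⟪∇L x, v⟫ + H/2 ‖v‖²`. For the step `v = -α d` with `H α ≤ 1` this yields
`L θₜ₊₁ ≤ L θₜ - α (⟪g, d⟫ - ‖d‖²/2)`, and expanding `‖g - d‖² ≤ c² ‖g‖²` shows
`⟪g, d⟫ - ‖d‖²/2 ≥ (1 - c²)/2 ‖g‖²`. Summing the resulting per-step decrease telescopes.
-/

open RealInnerProductSpace

section InnerProductSpace

variable {E : Type*} [NormedAddCommGroup E] [InnerProductSpace ℝ E]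

theorem le_inner_sub_half_norm_sq_of_norm_sub_le {g d : E} {c : ℝ} (hd : ‖g - d‖ ≤ c * ‖g‖) :
    (1 - c ^ 2) / 2 * ‖g‖ ^ 2 ≤ ⟪g, d⟫ - ‖d‖ ^ 2 / 2 := by
  have hsq : ‖g - d‖ ^ 2 ≤ (c * ‖g‖) ^ 2 := pow_le_pow_left₀ (norm_nonneg _) hd 2
  rw [norm_sub_sq_real] at hsq
  linarith

variable [CompleteSpace E] {L : E → ℝ} {H : ℝ}

theorem hasDerivAt_comp_add_smul {x v : E} {t : ℝ} (hL : DifferentiableAt ℝ L (x + t • v)) :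
    HasDerivAt (fun s : ℝ => L (x + s • v)) ⟪gradient L (x + t • v), v⟫ t := by
  have hline : HasDerivAt (fun s : ℝ => x + s • v) v t := by
    simpa using ((hasDerivAt_id t).smul_const v).const_add x
  simpa [Function.comp_def] using hL.hasGradientAt.hasFDerivAt.comp_hasDerivAt t hline

theorem inner_gradient_add_smul_sub_le
    (hlip : ∀ x y : E, ‖gradient L x - gradient L y‖ ≤ H * ‖x - y‖) (x v : E) {t : ℝ}
    (ht : 0 ≤ t) : ⟪gradient L (x + t • v) - gradient L x, v⟫ ≤ H * t * ‖v‖ ^ 2 :=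
  calc ⟪gradient L (x + t • v) - gradient L x, v⟫
      ≤ ‖gradient L (x + t • v) - gradient L x‖ * ‖v‖ := real_inner_le_norm _ _
    _ ≤ H * ‖(x + t • v) - x‖ * ‖v‖ := by gcongr; exact hlip _ _
    _ = H * t * ‖v‖ ^ 2 := by
      rw [add_sub_cancel_left, norm_smul, Real.norm_of_nonneg ht]; ring

theorem le_add_inner_gradient_add_sq (hL : Differentiable ℝ L)
    (hlip : ∀ x y : E, ‖gradient L x - gradient L y‖ ≤ H * ‖x - y‖) (x v : E) :
    L (x + v) ≤ L x + ⟪gradient L x, v⟫ + H / 2 * ‖v‖ ^ 2 := by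
  set φ : ℝ → ℝ := fun t => L (x + t • v) - t * ⟪gradient L x, v⟫ - H * t ^ 2 / 2 * ‖v‖ ^ 2
  have hφ (t : ℝ) : HasDerivAt φ
      (⟪gradient L (x + t • v), v⟫ - ⟪gradient L x, v⟫ - H * t * ‖v‖ ^ 2) t := by
    have hquad := (((hasDerivAt_pow 2 t).const_mul H).div_const 2).mul_const (‖v‖ ^ 2)
    exact (((hasDerivAt_comp_add_smul (hL _)).sub
      ((hasDerivAt_id t).mul_const ⟪gradient L x, v⟫)).sub hquad).congr_deriv (by ring)
  have hanti : AntitoneOn φ (Set.Icc 0 1) := by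
    refine antitoneOn_of_deriv_nonpos (convex_Icc 0 1)
      (fun t _ => (hφ t).continuousAt.continuousWithinAt)
      (fun t _ => (hφ t).differentiableAt.differentiableWithinAt) fun t ht => ?_
    rw [interior_Icc] at ht
    have := inner_gradient_add_smul_sub_le hlip x v ht.1.le
    rw [inner_sub_left] at this
    rw [(hφ t).deriv]
    linarith
  have h01 := hanti (Set.left_mem_Icc.2 zero_le_one) (Set.right_mem_Icc.2 zero_le_one) zero_le_one
  simp only [φ, one_smul, zero_smul, add_zero, zero_mul, one_mul, one_pow] at h01
  linarith

theorem le_sub_mul_of_gradient_step (hL : Differentiable ℝ L)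
    (hlip : ∀ x y : E, ‖gradient L x - gradient L y‖ ≤ H * ‖x - y‖) (x d : E) {α : ℝ}
    (hα : 0 ≤ α) (hHα : H * α ≤ 1) :
    L (x - α • d) ≤ L x - α * (⟪gradient L x, d⟫ - ‖d‖ ^ 2 / 2) := by
  have h := le_add_inner_gradient_add_sq hL hlip x (-(α • d))
  rw [← sub_eq_add_neg, inner_neg_right, real_inner_smul_right, norm_neg, norm_smul,
    Real.norm_of_nonneg hα] at h
  have hquad : H / 2 * (α * ‖d‖) ^ 2 ≤ α / 2 * ‖d‖ ^ 2 := by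
    have := mul_le_mul_of_nonneg_right hHα (by positivity : 0 ≤ α * ‖d‖ ^ 2 / 2)
    linarith
  linarith

end InnerProductSpace

/-- Convergence of CAGrad, summed form: under the per-step constraint
`‖∇L θₜ - dₜ‖ ≤ c ‖∇L θₜ‖` and update `θₜ₊₁ = θₜ - α dₜ`,
`∑_{t=0}^{T} ‖∇L θₜ‖² ≤ 2 (L θ₀ - L θ_{T+1}) / (α (1 - c²))`. -/
theorem cagrad_convergence_sum {n : ℕ} (L : EuclideanSpace ℝ (Fin n) → ℝ) (H α c : ℝ)
    (hH : 0 < H) (hα : 0 < α) (hαH : α ≤ 1 / H) (hc0 : 0 ≤ c) (hc1 : c < 1)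
    (hdiff : Differentiable ℝ L)
    (hlip : ∀ x y : EuclideanSpace ℝ (Fin n),
      ‖gradient L x - gradient L y‖ ≤ H * ‖x - y‖)
    (θ d : ℕ → EuclideanSpace ℝ (Fin n))
    (hupd : ∀ t : ℕ, θ (t + 1) = θ t - α • d t)
    (hd : ∀ t : ℕ, ‖gradient L (θ t) - d t‖ ≤ c * ‖gradient L (θ t)‖) :
    ∀ T : ℕ, ∑ t ∈ Finset.range (T + 1), ‖gradient L (θ t)‖ ^ 2 ≤
      2 * (L (θ 0) - L (θ (T + 1))) / (α * (1 - c ^ 2)) := by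
  intro T
  have hHα : H * α ≤ 1 := by rwa [le_div_iff₀ hH, mul_comm] at hαH
  have hc : 0 < 1 - c ^ 2 := by nlinarith
  have hstep (t : ℕ) :
      α * (1 - c ^ 2) / 2 * ‖gradient L (θ t)‖ ^ 2 ≤ L (θ t) - L (θ (t + 1)) := by
    have hdesc := le_sub_mul_of_gradient_step hdiff hlip (θ t) (d t) hα.le hHα
    have hdir := mul_le_mul_of_nonneg_left (le_inner_sub_half_norm_sq_of_norm_sub_le (hd t)) hα.le
    rw [hupd]
    linarith
  have hsum := Finset.sum_le_sum fun t (_ : t ∈ Finset.range (T + 1)) => hstep t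
  rw [← Finset.mul_sum, Finset.sum_range_sub' (fun t => L (θ t))] at hsum
  rw [le_div_iff₀ (by positivity)]
  linarith
end

section
/- Let L : ℝⁿ → ℝ be differentiable with H-Lipschitz gradient for some H > 0, bounded below by m ∈ ℝ (L(θ) ≥ m for all θ), let 0 < α ≤ 1/H and c ∈ [0, 1). Let (θₜ)ₜ≥0 be a sequence in ℝⁿ and (dₜ)ₜ≥0 directions with θₜ₊₁ = θₜ − α dₜ and ‖∇L(θₜ) − dₜ‖ ≤ c‖∇L(θₜ)‖ for every t. Then for every T ≥ 0, min_{0 ≤ t ≤ T} ‖∇L(θₜ)‖² ≤ 2(L(θ₀) − m) / (α(1 − c²)(T + 1)); in particular, the sequence T ↦ min_{0 ≤ t ≤ T} ‖∇L(θₜ)‖² is O(1/T). -/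
open RealInnerProductSpace

/-!
A gradient that is `H`-Lipschitz gives the descent inequality
`f (x + u) ≤ f x + ⟪∇f x, u⟫ + H/2 ‖u‖²`. For a step `x - α d` with `α H ≤ 1` and
`‖∇f x - d‖ ≤ c ‖∇f x‖` this makes `f` drop by at least `α (1 - c²)/2 ‖∇f x‖²`.
Summing these decreases over `t ≤ T` telescopes to `L θ₀ - L θ_{T+1} ≤ L θ₀ - m`, and the
minimum of `‖∇L θₜ‖²` is at most the average.
-/

section LipschitzGradient

variable {E : Type*} [NormedAddCommGroup E] [InnerProductSpace ℝ E] [CompleteSpace E]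
  {f : E → ℝ} {H : ℝ}

theorem apply_add_le_of_lipschitz_gradient (hf : Differentiable ℝ f)
    (hlip : ∀ x y, ‖gradient f x - gradient f y‖ ≤ H * ‖x - y‖) (x u : E) :
    f (x + u) ≤ f x + ⟪gradient f x, u⟫ + H / 2 * ‖u‖ ^ 2 := by
  -- The claim is `φ 1 ≤ φ 0`; Cauchy–Schwarz and the Lipschitz bound give `φ' ≤ 0` on `[0, 1]`.
  set φ : ℝ → ℝ := fun s => f (x + s • u) - s * ⟪gradient f x, u⟫ - H / 2 * s ^ 2 * ‖u‖ ^ 2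
  set φ' : ℝ → ℝ := fun s => ⟪gradient f (x + s • u) - gradient f x, u⟫ - H * s * ‖u‖ ^ 2
  have hφ : ∀ s, HasDerivAt φ (φ' s) s := by
    intro s
    have hline : HasDerivAt (fun s : ℝ => x + s • u) u s := by
      simpa using ((hasDerivAt_id s).smul_const u).const_add x
    have hfl := (hf (x + s • u)).hasFDerivAt.comp_hasDerivAt s hline
    rw [← inner_gradient_left] at hfl
    refine ((hfl.sub ((hasDerivAt_id s).mul_const ⟪gradient f x, u⟫)).sub
      (((hasDerivAt_pow 2 s).const_mul (H / 2)).mul_const (‖u‖ ^ 2))).congr_deriv ?_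
    simp only [φ', inner_sub_left]
    ring
  have hφ'_nonpos : ∀ s ∈ interior (Set.Icc (0 : ℝ) 1), φ' s ≤ 0 := by
    intro s hs
    rw [interior_Icc] at hs
    have hgrad : ‖gradient f (x + s • u) - gradient f x‖ ≤ H * (s * ‖u‖) := by
      simpa [norm_smul, abs_of_pos hs.1] using hlip (x + s • u) x
    have := (real_inner_le_norm _ u).trans (mul_le_mul_of_nonneg_right hgrad (norm_nonneg u))
    simp only [φ']
    nlinarith
  have hanti : AntitoneOn φ (Set.Icc 0 1) :=
    antitoneOn_of_hasDerivWithinAt_nonpos (convex_Icc 0 1)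
      (fun s _ => (hφ s).continuousAt.continuousWithinAt)
      (fun s _ => (hφ s).hasDerivWithinAt) hφ'_nonpos
  have := hanti (Set.left_mem_Icc.2 zero_le_one) (Set.right_mem_Icc.2 zero_le_one) zero_le_one
  simp only [φ, zero_smul, add_zero, one_smul, zero_mul, one_pow, mul_one, sub_zero] at this
  linarith

theorem apply_sub_smul_le_of_norm_gradient_sub_le (hf : Differentiable ℝ f)
    (hlip : ∀ x y, ‖gradient f x - gradient f y‖ ≤ H * ‖x - y‖) {α c : ℝ} (hα : 0 ≤ α)
    (hαH : α * H ≤ 1) {x d : E} (hd : ‖gradient f x - d‖ ≤ c * ‖gradient f x‖) :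
    f (x - α • d) ≤ f x - α * (1 - c ^ 2) / 2 * ‖gradient f x‖ ^ 2 := by
  set g := gradient f x
  have hdesc := apply_add_le_of_lipschitz_gradient hf hlip x (-(α • d))
  rw [← sub_eq_add_neg, inner_neg_right, real_inner_smul_right, norm_neg, norm_smul,
    Real.norm_of_nonneg hα] at hdesc
  have hstep_size : α * H * ‖d‖ ^ 2 ≤ ‖d‖ ^ 2 := mul_le_of_le_one_left (by positivity) hαH
  have hsq : ‖g - d‖ ^ 2 ≤ c ^ 2 * ‖g‖ ^ 2 := by
    rw [← mul_pow]; exact pow_le_pow_left₀ (norm_nonneg _) hd 2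
  -- `2 ⟪g, d⟫ - ‖d‖² = ‖g‖² - ‖g - d‖²` turns the descent inequality into the claim.
  have hpolar := norm_sub_sq_real g d
  calc f (x - α • d) ≤ f x - α * ⟪g, d⟫ + H / 2 * (α * ‖d‖) ^ 2 := hdesc
    _ ≤ f x - α / 2 * (‖g‖ ^ 2 - ‖g - d‖ ^ 2) := by nlinarith
    _ ≤ f x - α * (1 - c ^ 2) / 2 * ‖g‖ ^ 2 := by nlinarith

end LipschitzGradient

theorem sum_range_le_sub_of_le_sub_succ {u e : ℕ → ℝ} (h : ∀ t, u (t + 1) ≤ u t - e t) (N : ℕ) :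
    ∑ t ∈ Finset.range N, e t ≤ u 0 - u N := by
  rw [← Finset.sum_range_sub']
  exact Finset.sum_le_sum fun t _ => by linarith [h t]

theorem card_mul_inf'_le_sum {ι : Type*} {s : Finset ι} (hs : s.Nonempty) (e : ι → ℝ) :
    s.card * s.inf' hs e ≤ ∑ i ∈ s, e i := by
  simpa using s.card_nsmul_le_sum e _ fun i hi => s.inf'_le e hi

/-- CAGrad with a lower-bounded objective: `min_{0 ≤ t ≤ T} ‖∇L θₜ‖² ≤
2 (L θ₀ - m) / (α (1 - c²) (T + 1))`; in particular the minimum is `O(1/T)`, i.e.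
there is a constant `C` with `min_{t ≤ T} ‖∇L θₜ‖² ≤ C / (T + 1)` for all `T`. -/
theorem cagrad_convergence_min_bounded_below {n : ℕ} (L : EuclideanSpace ℝ (Fin n) → ℝ)
    (H α c m : ℝ)
    (hH : 0 < H) (hα : 0 < α) (hαH : α ≤ 1 / H) (hc0 : 0 ≤ c) (hc1 : c < 1)
    (hdiff : Differentiable ℝ L)
    (hlip : ∀ x y : EuclideanSpace ℝ (Fin n),
      ‖gradient L x - gradient L y‖ ≤ H * ‖x - y‖)
    (hbdd : ∀ x : EuclideanSpace ℝ (Fin n), m ≤ L x)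
    (θ d : ℕ → EuclideanSpace ℝ (Fin n))
    (hupd : ∀ t : ℕ, θ (t + 1) = θ t - α • d t)
    (hd : ∀ t : ℕ, ‖gradient L (θ t) - d t‖ ≤ c * ‖gradient L (θ t)‖) :
    (∀ T : ℕ, (Finset.range (T + 1)).inf' Finset.nonempty_range_add_one
        (fun t => ‖gradient L (θ t)‖ ^ 2) ≤
      2 * (L (θ 0) - m) / (α * (1 - c ^ 2) * (T + 1))) ∧
    (∃ C : ℝ, ∀ T : ℕ, (Finset.range (T + 1)).inf' Finset.nonempty_range_add_one
        (fun t => ‖gradient L (θ t)‖ ^ 2) ≤ C / (T + 1)) := by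
  have hαH' : α * H ≤ 1 := by rwa [le_div_iff₀ hH] at hαH
  have hrate : 0 < α * (1 - c ^ 2) := mul_pos hα (by nlinarith)
  have hdecrease (t : ℕ) :
      L (θ (t + 1)) ≤ L (θ t) - α * (1 - c ^ 2) / 2 * ‖gradient L (θ t)‖ ^ 2 :=
    hupd t ▸ apply_sub_smul_le_of_norm_gradient_sub_le hdiff hlip hα.le hαH' (hd t)
  have hbound (T : ℕ) : (Finset.range (T + 1)).inf' Finset.nonempty_range_add_one
      (fun t => ‖gradient L (θ t)‖ ^ 2) ≤ 2 * (L (θ 0) - m) / (α * (1 - c ^ 2) * (T + 1)) := by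
    have hsum := sum_range_le_sub_of_le_sub_succ (u := fun t => L (θ t)) hdecrease (T + 1)
    have hmin := card_mul_inf'_le_sum (Finset.nonempty_range_add_one (n := T))
      fun t => ‖gradient L (θ t)‖ ^ 2
    rw [← Finset.mul_sum] at hsum
    rw [Finset.card_range, Nat.cast_add_one] at hmin
    rw [le_div_iff₀ (by positivity)]
    nlinarith [hbdd (θ (T + 1))]
  exact ⟨hbound, _, fun T => (hbound T).trans_eq (div_div _ _ _).symm⟩
end
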